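/- In a tensor network whose cut γ through n maximally-entangled edges of dimension D defines isometries C and D on both sides, the minimality property holds: for any other cut γ′ separating the same boundary region, n log D ≤ log dim γ′. In other words, an isometric cut achieves the minimal graph length among all cuts homologous to the boundary region. -/

import Mathlib

open Matrix Kronecker BigOperators

/-- Von Neumann entropy of a matrix (junk value 0 if not Hermitian). -/
noncomputable def vnEntropy {n : Type*} [Fintype n] [DecidableEq n] (ρ : Matrix n n ℂ) : ℝ :=
  if h : ρ.IsHermitian then -∑ i, (h.eigenvalues i) * Real.log (h.eigenvalues i) else 0

/-- Outer product |ψ⟩⟨ψ| of a vector. -/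
def outer {n : Type*} (ψ : n → ℂ) : Matrix n n ℂ := fun i j => ψ i * star (ψ j)

/-- Partial trace over the second (right) tensor factor. -/
noncomputable def ptraceR {m p : Type*} [Fintype p] (ρ : Matrix (m × p) (m × p) ℂ) :
    Matrix m m ℂ := fun i j => ∑ k, ρ (i, k) (j, k)

/-- Partial trace over the first (left) tensor factor. -/
noncomputable def ptraceL {m p : Type*} [Fintype m] (ρ : Matrix (m × p) (m × p) ℂ) :
    Matrix p p ℂ := fun i j => ∑ k, ρ (k, i) (k, j)

theorem isometric_cut_is_minimal {A Ab : Type*} [Fintype A] [Fintype Ab]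
    (D n : ℕ) (hDpos : 0 < D)
    (C : Matrix A (Fin n → Fin D) ℂ) (Dm : Matrix Ab (Fin n → Fin D) ℂ)
    (hC : Cᴴ * C = 1) (hD : Dmᴴ * Dm = 1)
    (ψ : A × Ab → ℂ)
    (hψ : ψ = (C ⊗ₖ Dm).mulVec
      (fun p : (Fin n → Fin D) × (Fin n → Fin D) => if p.1 = p.2 then 1 else 0))
    (k : ℕ) (f : Fin k → A → ℂ) (g : Fin k → Ab → ℂ)
    (hfact : ∀ i j, ψ (i, j) = ∑ K, f K i * g K j) :
    (n : ℝ) * Real.log D ≤ Real.log k := by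
  classical
  set M : Matrix A Ab ℂ := Matrix.of (fun i j => ψ (i, j)) with hM
  -- M = C * Dmᵀ
  have hM1 : M = C * Dmᵀ := by
    ext i j
    simp only [hM, Matrix.of_apply, hψ, Matrix.mulVec, dotProduct,
      Matrix.mul_apply, Matrix.transpose_apply]
    rw [Fintype.sum_prod_type]
    simp [kroneckerMap_apply, mul_ite, mul_comm]
  -- M factors through Fin k
  have hM2 : M = (Matrix.of fun i K => f K i) * (Matrix.of fun K j => g K j) := by
    ext i j
    simp [hM, hfact, Matrix.mul_apply]
  -- rank M ≤ k
  have hrank_le : M.rank ≤ k := by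
    calc M.rank ≤ (Matrix.of fun (i : A) (K : Fin k) => f K i).rank := by
          rw [hM2]; exact Matrix.rank_mul_le_left _ _
      _ ≤ Fintype.card (Fin k) := Matrix.rank_le_card_width _
      _ = k := Fintype.card_fin k
  -- rank M ≥ D^n : Cᴴ * M * (Dm.map star) = 1
  have hDT : Dmᵀ * Dm.map star = 1 := by
    have := congrArg Matrix.transpose hD
    simpa [Matrix.transpose_mul, Matrix.conjTranspose, Matrix.transpose_map] using this
  have hone : Cᴴ * M * Dm.map star = 1 := by
    rw [hM1, ← Matrix.mul_assoc, hC, Matrix.one_mul]; exact hDT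
  have hrank_ge : D ^ n ≤ M.rank := by
    have h1 : (1 : Matrix (Fin n → Fin D) (Fin n → Fin D) ℂ).rank
        = Fintype.card (Fin n → Fin D) := Matrix.rank_one
    have h2 : (Cᴴ * M * Dm.map star).rank ≤ M.rank := by
      calc (Cᴴ * M * Dm.map star).rank ≤ (Cᴴ * M).rank := Matrix.rank_mul_le_left _ _
        _ ≤ M.rank := Matrix.rank_mul_le_right _ _
    rw [hone, h1] at h2
    simpa [Fintype.card_fun] using h2
  have hkey : (D : ℝ) ^ n ≤ (k : ℝ) := by
    exact_mod_cast le_trans hrank_ge hrank_le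
  calc (n : ℝ) * Real.log D = Real.log ((D : ℝ) ^ n) := (Real.log_pow (D:ℝ) n).symm
    _ ≤ Real.log k := Real.log_le_log (by positivity) hkey
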